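/- Let ν be a Borel probability measure on P([0,1]^d) such that for every finite set F of words over Λ and every Borel set A ⊆ [0,1]^F, ν({ μ : (μ(Q_w))_{w∈F} ∈ A }) = ℙ({ x : (L(x,w))_{w∈F} ∈ A }). Then for every Borel set E ⊆ [0,1]^d, the function μ ↦ μ(E) is ν-measurable and ∫_{P([0,1]^d)} μ(E) dν(μ) = λ_d(E), where λ_d is d-dimensional Lebesgue measure. -/

import Mathlib

open MeasureTheory Filter Set
open scoped ENNReal NNReal

/-- The alphabet `Λ = {0,1}^d`, identified with `{0,…,2^d−1}`. -/
abbrev Lam (d : ℕ) := Fin d → Bool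

/-- Finite words over the alphabet `Λ` (including the empty word). -/
abbrev Wd (d : ℕ) := List (Lam d)

/-- The ambient space `ℝ^{2^d}` (with the Euclidean metric), coordinates indexed by `Λ`. -/
abbrev Pt (d : ℕ) := EuclideanSpace ℝ (Lam d)

/-- The simplex `Δ = {x : x_a ≥ 0, Σ_a x_a = 1}` in `ℝ^{2^d}`. -/
def simplexSet (d : ℕ) : Set (Pt d) := {p | (∀ a, 0 ≤ p a) ∧ (∑ a, p a) = 1}

/-- The uniform probability distribution `σ` on the simplex: the normalized restriction to
`Δ` of the `(2^d − 1)`-dimensional Hausdorff measure on `ℝ^{2^d}`. -/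
noncomputable def sigmaMeas (d : ℕ) : Measure (Pt d) :=
  ((Measure.hausdorffMeasure ((2 ^ d : ℝ) - 1) : Measure (Pt d)) (simplexSet d))⁻¹ •
    ((Measure.hausdorffMeasure ((2 ^ d : ℝ) - 1) : Measure (Pt d)).restrict (simplexSet d))

/-- Auxiliary recursion for labels: `labelFrom d x pre w` is the product, over the letters of
`w`, of the coordinates of `x` along the path starting at the node `pre`. -/
noncomputable def labelFrom (d : ℕ) (x : Wd d → Pt d) : Wd d → Wd d → ℝ
  | _, [] => 1
  | pre, a :: w => x pre a * labelFrom d x (pre ++ [a]) w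

/-- The label `L(x,w) = Π_{j=1}^{k} x(w_1⋯w_{j−1})_{w_j}` of the word `w` (empty word ↦ 1). -/
noncomputable def label (d : ℕ) (x : Wd d → Pt d) (w : Wd d) : ℝ := labelFrom d x [] w

/-- The lower corner of the dyadic cube of the word `w`: `a_i = Σ_j w_j(i) 2^{−j}`. -/
noncomputable def dyadicA (d : ℕ) (w : Wd d) (i : Fin d) : ℝ :=
  ∑ j : Fin w.length, (if w.get j i then ((2 : ℝ) ^ (j.val + 1))⁻¹ else 0)

/-- The dyadic cube `Q_w ⊆ [0,1]^d` of generation `|w|`: product of the intervals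
`[a_i, a_i + 2^{−k})`, taken as `[a_i, 1]` when `a_i + 2^{−k} = 1`. -/
noncomputable def Qcube (d : ℕ) (w : Wd d) : Set (Fin d → ℝ) :=
  {y | ∀ i, dyadicA d w i ≤ y i ∧
       (y i < dyadicA d w i + ((2 : ℝ) ^ w.length)⁻¹ ∨
        (dyadicA d w i + ((2 : ℝ) ^ w.length)⁻¹ = 1 ∧ y i ≤ 1))}

/-- Borel measurable structure on the space `P([0,1]^d)` of Borel probability measures on
`[0,1]^d` with the topology of weak convergence. -/
noncomputable instance (d : ℕ) :
    MeasurableSpace (ProbabilityMeasure (Set.Icc (0 : Fin d → ℝ) 1)) := borel _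

/-!
Averaging against `ν` gives the intensity measure `m B = ∫ μ B dν` on `[0,1]^d`; it is a
measure because the Borel σ-algebra of the weak topology on `P([0,1]^d)` is finer than the Giry
σ-algebra. By hypothesis `μ(Q_w)` has the law of the label `L(x,w)`, a product of coordinates
of `x` at the `|w|` distinct strict prefixes of `w`, hence of independent factors, each of mean
`2^{-d}` because the uniform law on the simplex is invariant under permuting coordinates.
So `m(Q_w) = 2^{-d|w|} = λ_d(Q_w)`, and since the dyadic cubes form a π-system generating the
Borel sets of `[0,1]^d`, `m` is Lebesgue measure there.
-/

section WeakTopology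

variable {Ω : Type*} [TopologicalSpace Ω] [MeasurableSpace Ω] [OpensMeasurableSpace Ω]
  [HasOuterApproxClosed Ω]

lemma ProbabilityMeasure.upperSemicontinuous_apply_of_isClosed {F : Set Ω} (hF : IsClosed F) :
    UpperSemicontinuous fun μ : ProbabilityMeasure Ω => (μ : Measure Ω) F := fun μ _ hlt =>
  eventually_lt_of_limsup_lt <|
    (ProbabilityMeasure.limsup_measure_closed_le_of_tendsto tendsto_id hF).trans_lt hlt

variable [MeasurableSpace (ProbabilityMeasure Ω)] [BorelSpace (ProbabilityMeasure Ω)]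

lemma ProbabilityMeasure.measurable_toMeasure_of_borelSpace [BorelSpace Ω] :
    Measurable fun μ : ProbabilityMeasure Ω => (μ : Measure Ω) :=
  Measurable.measure_of_isPiSystem_of_isProbabilityMeasure
    (BorelSpace.measurable_eq.trans borel_eq_generateFrom_isClosed) isPiSystem_isClosed
    fun _ hF => (upperSemicontinuous_apply_of_isClosed hF).measurable

end WeakTopology

section Intensity

variable {Ω : Type*} [MeasurableSpace Ω] [MeasurableSpace (ProbabilityMeasure Ω)]
  (ν : Measure (ProbabilityMeasure Ω))

lemma ProbabilityMeasure.isProbabilityMeasure_bind_toMeasure [IsProbabilityMeasure ν]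
    (hmeas : Measurable fun μ : ProbabilityMeasure Ω => (μ : Measure Ω)) :
    IsProbabilityMeasure (ν.bind fun μ => (μ : Measure Ω)) := by
  constructor
  simp [Measure.bind_apply MeasurableSet.univ hmeas.aemeasurable]

lemma ProbabilityMeasure.integral_toReal_apply_eq_bind
    (hmeas : Measurable fun μ : ProbabilityMeasure Ω => (μ : Measure Ω))
    {B : Set Ω} (hB : MeasurableSet B) :
    ∫ μ, ((μ : Measure Ω) B).toReal ∂ν = ((ν.bind fun μ => (μ : Measure Ω)) B).toReal := by
  rw [Measure.bind_apply hB hmeas.aemeasurable, integral_toReal]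
  · exact (Measure.measurable_coe hB).comp_aemeasurable hmeas.aemeasurable
  · exact Eventually.of_forall fun μ => measure_lt_top _ _

end Intensity

section Coordinates

variable {α X : Type*} [MeasurableSpace X] {P : Measure (α → X)} {σ : Measure X}

lemma map_eval_eq_of_map_restrict_eq_pi (a : α)
    (h : P.map (fun x (w : ({a} : Finset α)) => x w) = Measure.pi fun _ => σ) :
    P.map (fun x => x a) = σ := by
  have hres : Measurable fun x : α → X => fun w : ({a} : Finset α) => x w :=
    measurable_pi_lambda _ fun w => measurable_pi_apply _
  calc P.map (fun x => x a)
      = (P.map fun x (w : ({a} : Finset α)) => x w).map (MeasurableEquiv.funUnique _ X) := by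
        rw [Measure.map_map (MeasurableEquiv.measurable _) hres]
        rfl
    _ = σ := by rw [h]; exact (measurePreserving_funUnique σ _).map_eq

lemma integral_prod_eq_prod_of_map_restrict_eq_pi [SigmaFinite σ] (F : Finset α)
    (h : P.map (fun x (w : F) => x w) = Measure.pi fun _ => σ)
    {f : α → X → ℝ} (hf : ∀ a, Measurable (f a)) :
    ∫ x, ∏ a ∈ F, f a (x a) ∂P = ∏ a ∈ F, ∫ y, f a y ∂σ := by
  have hres : Measurable fun x : α → X => fun w : F => x w :=
    measurable_pi_lambda _ fun w => measurable_pi_apply _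
  have hg : Measurable fun y : F → X => ∏ a : F, f a (y a) :=
    Finset.measurable_prod _ fun a _ => (hf a).comp (measurable_pi_apply a)
  calc ∫ x, ∏ a ∈ F, f a (x a) ∂P = ∫ x, ∏ a : F, f a (x a) ∂P := by
        congr 1 with x; exact (Finset.prod_coe_sort F fun a => f a (x a)).symm
    _ = ∫ y, ∏ a : F, f a (y a) ∂(Measure.pi fun _ : F => σ) := by
        rw [← h, integral_map hres.aemeasurable hg.aestronglyMeasurable]
    _ = ∏ a ∈ F, ∫ y, f a y ∂σ := by
        rw [integral_fintype_prod_eq_prod, Finset.prod_coe_sort F fun a => ∫ y, f a y ∂σ]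

end Coordinates

section Simplex

lemma integral_apply_eq_inv_card_of_perm_invariant {ι : Type*} [Fintype ι]
    {μ : Measure (EuclideanSpace ℝ ι)} [IsProbabilityMeasure μ]
    (hperm : ∀ τ : Equiv.Perm ι,
      MeasurePreserving (LinearIsometryEquiv.piLpCongrLeft 2 ℝ ℝ τ) μ μ)
    (hΔ : ∀ᵐ p ∂μ, (∀ a, 0 ≤ p a) ∧ ∑ a, p a = 1) (a : ι) :
    ∫ p, p a ∂μ = (Fintype.card ι : ℝ)⁻¹ := by
  classical
  have hint (b : ι) : Integrable (fun p : EuclideanSpace ℝ ι => p b) μ := by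
    refine (integrable_const (1 : ℝ)).mono' (by fun_prop) ?_
    filter_upwards [hΔ] with p ⟨hnonneg, hsum⟩
    rw [Real.norm_of_nonneg (hnonneg b), ← hsum]
    exact Finset.single_le_sum (fun c _ => hnonneg c) (Finset.mem_univ b)
  have hswap (b : ι) : ∫ p, p b ∂μ = ∫ p, p a ∂μ := by
    let T := LinearIsometryEquiv.piLpCongrLeft 2 ℝ ℝ (Equiv.swap a b)
    rw [← (hperm (Equiv.swap a b)).integral_comp T.toHomeomorph.measurableEmbedding]
    congr 1 with p
    simp
  have hsum : ∑ b, ∫ p, p b ∂μ = 1 := by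
    rw [← integral_finsetSum _ fun b _ => hint b, integral_congr_ae (hΔ.mono fun p hp => hp.2)]
    simp
  rw [Finset.sum_congr rfl fun b _ => hswap b, Finset.sum_const, Finset.card_univ,
    nsmul_eq_mul] at hsum
  exact (inv_eq_of_mul_eq_one_right hsum).symm

lemma measurableSet_simplexSet (d : ℕ) : MeasurableSet (simplexSet d) := by
  have hΔ : simplexSet d = (⋂ a, {p : Pt d | 0 ≤ p a}) ∩ (fun p : Pt d => ∑ a, p a) ⁻¹' {1} := by
    ext p; simp [simplexSet]
  rw [hΔ]
  exact (MeasurableSet.iInter fun a => measurableSet_le measurable_const (by fun_prop)).inter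
    ((by fun_prop : Measurable fun p : Pt d => ∑ a, p a) (measurableSet_singleton 1))

lemma ae_mem_simplexSet_sigmaMeas (d : ℕ) : ∀ᵐ p ∂(sigmaMeas d), p ∈ simplexSet d :=
  Measure.ae_smul_measure (ae_restrict_mem (measurableSet_simplexSet d)) _

lemma measurePreserving_piLpCongrLeft_sigmaMeas (d : ℕ) (τ : Equiv.Perm (Lam d)) :
    MeasurePreserving (LinearIsometryEquiv.piLpCongrLeft 2 ℝ ℝ τ) (sigmaMeas d) (sigmaMeas d) := by
  let T : Pt d ≃ₗᵢ[ℝ] Pt d := LinearIsometryEquiv.piLpCongrLeft 2 ℝ ℝ τ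
  have hS : T ⁻¹' simplexSet d = simplexSet d := by
    ext p
    simp only [simplexSet, Set.mem_preimage, Set.mem_ofPred_eq, T,
      LinearIsometryEquiv.piLpCongrLeft_apply, Equiv.piCongrLeft'_apply]
    rw [← τ.symm.forall_congr_right (q := fun a => 0 ≤ p a), Equiv.sum_comp τ.symm fun a => p a]
  have h := (T.toIsometryEquiv.measurePreserving_hausdorffMeasure ((2 ^ d : ℝ) - 1))
    |>.restrict_preimage (measurableSet_simplexSet d)
  rw [LinearIsometryEquiv.coe_toIsometryEquiv, hS] at h
  exact h.smul_measure _

end Simplex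

section Labels

lemma List.injOn_take_range {α : Type*} (w : List α) :
    Set.InjOn w.take (Finset.range w.length) := fun i hi j hj hij => by
  simpa [(Finset.mem_range.mp hi).le, (Finset.mem_range.mp hj).le] using congrArg List.length hij

lemma labelFrom_eq_prod (d : ℕ) (x : Wd d → Pt d) (w : Wd d) (pre : Wd d) :
    labelFrom d x pre w = ∏ j ∈ Finset.range w.length, x (pre ++ w.take j) (w.getD j default) := by
  induction w generalizing pre with
  | nil => simp [labelFrom]
  | cons a t ih =>
    rw [labelFrom, ih, List.length_cons, Finset.prod_range_succ', mul_comm]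
    simp [List.append_assoc]

lemma label_eq_prod_prefixes (d : ℕ) (x : Wd d → Pt d) (w : Wd d) :
    label d x w = ∏ u ∈ (Finset.range w.length).image w.take, x u (w.getD u.length default) := by
  rw [Finset.prod_image w.injOn_take_range, label, labelFrom_eq_prod]
  refine Finset.prod_congr rfl fun j hj => ?_
  simp [(Finset.mem_range.mp hj).le]

lemma measurable_label (d : ℕ) (w : Wd d) : Measurable fun x : Wd d → Pt d => label d x w := by
  simp_rw [label_eq_prod_prefixes]
  exact Finset.measurable_prod _ fun u _ => by fun_prop

lemma integral_label (d : ℕ) [IsProbabilityMeasure (sigmaMeas d)] {P : Measure (Wd d → Pt d)}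
    (hP : ∀ F : Finset (Wd d),
      P.map (fun x (w : F) => x (w : Wd d)) = Measure.pi fun _ : F => sigmaMeas d)
    (w : Wd d) :
    ∫ x, label d x w ∂P = ((2 ^ d : ℝ)⁻¹) ^ w.length := by
  simp_rw [label_eq_prod_prefixes]
  rw [integral_prod_eq_prod_of_map_restrict_eq_pi _ (hP _)
    (f := fun u p => p (w.getD u.length default)) fun _ => by fun_prop]
  have hmean (a : Lam d) : ∫ p, p a ∂(sigmaMeas d) = (2 ^ d : ℝ)⁻¹ := by
    simp [integral_apply_eq_inv_card_of_perm_invariant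
      (measurePreserving_piLpCongrLeft_sigmaMeas d) (ae_mem_simplexSet_sigmaMeas d)]
  simp only [hmean, Finset.prod_const, Finset.card_image_of_injOn w.injOn_take_range,
    Finset.card_range]

end Labels

section DyadicCubes

variable {d : ℕ}

lemma dyadicA_nil (i : Fin d) : dyadicA d [] i = 0 := by simp [dyadicA]

lemma dyadicA_eq_sum_range (w : Wd d) (i : Fin d) :
    dyadicA d w i = ∑ j ∈ Finset.range w.length,
      if (w.getD j default) i then ((2 : ℝ) ^ (j + 1))⁻¹ else 0 := by
  rw [dyadicA, ← Fin.sum_univ_eq_sum_range]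
  exact Finset.sum_congr rfl fun j _ => by
    rw [List.getD_eq_getElem _ _ j.isLt, List.get_eq_getElem]

lemma dyadicA_append (w : Wd d) (a : Lam d) (i : Fin d) :
    dyadicA d (w ++ [a]) i
      = dyadicA d w i + if a i then ((2 : ℝ) ^ (w.length + 1))⁻¹ else 0 := by
  rw [dyadicA_eq_sum_range, dyadicA_eq_sum_range, List.length_append, List.length_singleton,
    Finset.sum_range_succ]
  congr 1
  · refine Finset.sum_congr rfl fun j hj => ?_
    have hj : j < w.length := Finset.mem_range.mp hj
    rw [List.getD_eq_getElem _ _ (by simp; omega), List.getD_eq_getElem _ _ hj,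
      List.getElem_append_left hj]
  · simp

lemma exists_nat_dyadicA_eq (w : Wd d) (i : Fin d) :
    ∃ m : ℕ, dyadicA d w i = m / 2 ^ w.length := by
  induction w using List.reverseRecOn with
  | nil => exact ⟨0, by simp [dyadicA_nil]⟩
  | append_singleton w a ih =>
    obtain ⟨m, hm⟩ := ih
    refine ⟨2 * m + if a i then 1 else 0, ?_⟩
    rw [dyadicA_append, hm, List.length_append, List.length_singleton]
    split_ifs <;> push_cast <;> field_simp <;> ring

-- `a_i + 2^{-(k+1)}` is an odd multiple of `2^{-(k+1)}`.
lemma dyadicA_add_inv_two_pow_succ_ne_one (w : Wd d) (i : Fin d) :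
    dyadicA d w i + ((2 : ℝ) ^ (w.length + 1))⁻¹ ≠ 1 := by
  obtain ⟨m, hm⟩ := exists_nat_dyadicA_eq w i
  rw [hm]
  intro h
  have hodd : ((2 * m + 1 : ℕ) : ℝ) = ((2 ^ (w.length + 1) : ℕ) : ℝ) := by
    rw [pow_succ] at h ⊢
    push_cast
    field_simp at h
    linarith
  have := Nat.cast_injective hodd
  omega

lemma inv_two_pow_eq_add (k : ℕ) :
    ((2 : ℝ) ^ k)⁻¹ = ((2 : ℝ) ^ (k + 1))⁻¹ + ((2 : ℝ) ^ (k + 1))⁻¹ := by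
  rw [pow_succ]; field_simp; ring

lemma mem_Qcube_append_iff {w : Wd d} {a : Lam d} {y : Fin d → ℝ} :
    y ∈ Qcube d (w ++ [a]) ↔ ∀ i,
      let c := dyadicA d w i + if a i then ((2 : ℝ) ^ (w.length + 1))⁻¹ else 0
      c ≤ y i ∧ (y i < c + ((2 : ℝ) ^ (w.length + 1))⁻¹ ∨
        (c + ((2 : ℝ) ^ (w.length + 1))⁻¹ = 1 ∧ y i ≤ 1)) := by
  simp only [Qcube, Set.mem_ofPred_eq, dyadicA_append, List.length_append, List.length_singleton]

lemma Qcube_nil : Qcube d [] = Set.Icc 0 1 := by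
  ext y
  simp only [Qcube, dyadicA_nil, List.length_nil, pow_zero, inv_one, zero_add, true_and,
    Set.mem_ofPred_eq, Set.mem_Icc, Pi.le_def, Pi.zero_apply, Pi.one_apply, ← forall_and]
  exact forall_congr' fun i => and_congr_right fun _ => or_iff_right_of_imp le_of_lt

lemma Qcube_append_subset (w : Wd d) (a : Lam d) : Qcube d (w ++ [a]) ⊆ Qcube d w := by
  intro y hy i
  obtain ⟨hlow, hup⟩ := mem_Qcube_append_iff.mp hy i
  have hsum := inv_two_pow_eq_add w.length
  have hpos : (0 : ℝ) < ((2 : ℝ) ^ (w.length + 1))⁻¹ := by positivity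
  split_ifs at hlow hup with hai
  · refine ⟨by linarith, ?_⟩
    rcases hup with hup | ⟨hup, hle⟩
    · exact Or.inl (by linarith)
    · exact Or.inr ⟨by linarith, hle⟩
  · refine ⟨by linarith, Or.inl ?_⟩
    rcases hup with hup | ⟨hup, -⟩
    · linarith
    · exact absurd (by linarith) (dyadicA_add_inv_two_pow_succ_ne_one w i)

lemma mem_Qcube_append_of_mem {w : Wd d} {y : Fin d → ℝ} (hy : y ∈ Qcube d w) :
    y ∈ Qcube d (w ++ [fun i => decide (dyadicA d w i + ((2 : ℝ) ^ (w.length + 1))⁻¹ ≤ y i)]) := by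
  refine mem_Qcube_append_iff.mpr fun i => ?_
  obtain ⟨hlow, hup⟩ := hy i
  have hsum := inv_two_pow_eq_add w.length
  simp only [decide_eq_true_eq]
  split_ifs with hhalf
  · refine ⟨hhalf, ?_⟩
    rcases hup with hup | ⟨hup, hle⟩
    · exact Or.inl (by linarith)
    · exact Or.inr ⟨by linarith, hle⟩
  · exact ⟨by linarith, Or.inl (by linarith)⟩

lemma eq_of_mem_Qcube_append {w : Wd d} {a b : Lam d} {y : Fin d → ℝ}
    (ha : y ∈ Qcube d (w ++ [a])) (hb : y ∈ Qcube d (w ++ [b])) : a = b := by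
  have hne := dyadicA_add_inv_two_pow_succ_ne_one (d := d) w
  have key {u v : Lam d} (hu : y ∈ Qcube d (w ++ [u])) (hv : y ∈ Qcube d (w ++ [v])) (i : Fin d)
      (hui : u i = true) : v i = true := by
    by_contra hvi
    obtain ⟨hlow, -⟩ := mem_Qcube_append_iff.mp hu i
    obtain ⟨-, hup⟩ := mem_Qcube_append_iff.mp hv i
    simp only [hui, hvi, if_true, if_false, add_zero] at hlow hup
    rcases hup with hup | ⟨hup, -⟩
    · linarith
    · exact hne i hup
  funext i
  exact Bool.eq_iff_iff.mpr ⟨key ha hb i, key hb ha i⟩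

lemma Qcube_append_subset_left (w u : Wd d) : Qcube d (w ++ u) ⊆ Qcube d w := by
  induction u using List.reverseRecOn with
  | nil => simp
  | append_singleton u a ih =>
    rw [← List.append_assoc]
    exact (Qcube_append_subset _ a).trans ih

lemma Qcube_subset_Icc (w : Wd d) : Qcube d w ⊆ Set.Icc 0 1 :=
  Qcube_nil (d := d) ▸ Qcube_append_subset_left [] w

lemma exists_mem_Qcube {y : Fin d → ℝ} (hy : y ∈ Set.Icc 0 1) (k : ℕ) :
    ∃ w : Wd d, w.length = k ∧ y ∈ Qcube d w := by
  induction k with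
  | zero => exact ⟨[], rfl, Qcube_nil ▸ hy⟩
  | succ k ih =>
    obtain ⟨w, rfl, hw⟩ := ih
    exact ⟨_, by simp, mem_Qcube_append_of_mem hw⟩

lemma eq_of_mem_Qcube {w v : Wd d} (hl : w.length = v.length) {y : Fin d → ℝ}
    (hw : y ∈ Qcube d w) (hv : y ∈ Qcube d v) : w = v := by
  induction w using List.reverseRecOn generalizing v with
  | nil => exact (List.eq_nil_of_length_eq_zero hl.symm).symm
  | append_singleton w a ih =>
    obtain ⟨u, b, rfl⟩ : ∃ u b, v = u ++ [b] :=
      ⟨v.dropLast, v.getLast (by rintro rfl; simp at hl),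
        (List.dropLast_append_getLast _).symm⟩
    obtain rfl : w = u := ih (by simpa using hl) (Qcube_append_subset w a hw)
      (Qcube_append_subset u b hv)
    rw [eq_of_mem_Qcube_append hw hv]

lemma Qcube_subset_of_mem_of_length_le {w v : Wd d} (hl : w.length ≤ v.length) {y : Fin d → ℝ}
    (hw : y ∈ Qcube d w) (hv : y ∈ Qcube d v) : Qcube d v ⊆ Qcube d w := by
  have htake : v.take w.length = w :=
    eq_of_mem_Qcube (by simpa using hl)
      (Qcube_append_subset_left _ (v.drop w.length) (by rwa [List.take_append_drop])) hw
  rw [← List.take_append_drop w.length v, htake]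
  exact Qcube_append_subset_left w _

lemma Qcube_eq_pi (w : Wd d) :
    Qcube d w = Set.univ.pi fun i =>
      if dyadicA d w i + ((2 : ℝ) ^ w.length)⁻¹ = 1 then Set.Icc (dyadicA d w i) 1
      else Set.Ico (dyadicA d w i) (dyadicA d w i + ((2 : ℝ) ^ w.length)⁻¹) := by
  ext y
  simp only [Qcube, Set.mem_ofPred_eq, Set.mem_univ_pi]
  refine forall_congr' fun i => ?_
  split_ifs with h
  · rw [Set.mem_Icc, h]
    exact and_congr_right fun _ =>
      ⟨fun h' => h'.elim le_of_lt And.right, fun h' => Or.inr ⟨rfl, h'⟩⟩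
  · simp [h]

lemma measurableSet_Qcube (w : Wd d) : MeasurableSet (Qcube d w) := by
  rw [Qcube_eq_pi]
  exact MeasurableSet.univ_pi fun i => by split_ifs <;> measurability

lemma volume_Qcube (w : Wd d) :
    volume (Qcube d w) = ENNReal.ofReal ((2 : ℝ) ^ w.length)⁻¹ ^ d := by
  rw [Qcube_eq_pi, volume_pi_pi]
  have hside (i : Fin d) : volume (if dyadicA d w i + ((2 : ℝ) ^ w.length)⁻¹ = 1
      then Set.Icc (dyadicA d w i) 1
      else Set.Ico (dyadicA d w i) (dyadicA d w i + ((2 : ℝ) ^ w.length)⁻¹))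
      = ENNReal.ofReal ((2 : ℝ) ^ w.length)⁻¹ := by
    split_ifs with h
    · rw [Real.volume_Icc, ← h, add_sub_cancel_left]
    · rw [Real.volume_Ico, add_sub_cancel_left]
  simp [hside]

lemma dist_le_of_mem_Qcube {w : Wd d} {y z : Fin d → ℝ} (hy : y ∈ Qcube d w)
    (hz : z ∈ Qcube d w) : dist y z ≤ ((2 : ℝ) ^ w.length)⁻¹ := by
  have hbounds {x : Fin d → ℝ} (hx : x ∈ Qcube d w) (i : Fin d) :
      x i ∈ Set.Icc (dyadicA d w i) (dyadicA d w i + ((2 : ℝ) ^ w.length)⁻¹) := by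
    obtain ⟨hlow, hup⟩ := hx i
    exact ⟨hlow, hup.elim le_of_lt fun h => h.1 ▸ h.2⟩
  refine (dist_pi_le_iff (by positivity)).mpr fun i => ?_
  simpa using Real.dist_le_of_mem_Icc (hbounds hy i) (hbounds hz i)

end DyadicCubes

abbrev unitCube (d : ℕ) : Set (Fin d → ℝ) := Set.Icc 0 1

section UnitCube

variable {d : ℕ}

lemma comap_volume_preimage_val {E : Set (Fin d → ℝ)} (hE : E ⊆ unitCube d) :
    (volume.comap Subtype.val : Measure (unitCube d)) (Subtype.val ⁻¹' E) = volume E := by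
  rw [(MeasurableEmbedding.subtype_coe measurableSet_Icc).comap_apply,
    Subtype.image_preimage_val, Set.inter_eq_self_of_subset_right hE]

def cubeSets (d : ℕ) : Set (Set (unitCube d)) :=
  Set.range fun w : Wd d => Subtype.val ⁻¹' Qcube d w

lemma isPiSystem_cubeSets : IsPiSystem (cubeSets d) := by
  rintro _ ⟨w, rfl⟩ _ ⟨v, rfl⟩ ⟨y, hyw, hyv⟩
  rcases le_total w.length v.length with hl | hl
  · exact ⟨v, (Set.inter_eq_self_of_subset_right
      (Set.preimage_mono (Qcube_subset_of_mem_of_length_le hl hyw hyv))).symm⟩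
  · exact ⟨w, (Set.inter_eq_self_of_subset_left
      (Set.preimage_mono (Qcube_subset_of_mem_of_length_le hl hyv hyw))).symm⟩

/-- Every open subset of `[0,1]^d` is the union of the (countably many) dyadic cubes inside it,
since the cubes of generation `k` containing a point have diameter at most `2^{-k}`. -/
lemma measurableSpace_eq_generateFrom_cubeSets :
    (inferInstance : MeasurableSpace (unitCube d)) = .generateFrom (cubeSets d) := by
  refine le_antisymm ?_ (MeasurableSpace.generateFrom_le ?_)
  · rw [BorelSpace.measurable_eq (α := unitCube d)]
    refine MeasurableSpace.generateFrom_le fun U hU => ?_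
    obtain ⟨V, hV, rfl⟩ := isOpen_induced_iff.mp hU
    have hunion : (Subtype.val ⁻¹' V : Set (unitCube d))
        = ⋃ w ∈ {w : Wd d | Qcube d w ⊆ V}, Subtype.val ⁻¹' Qcube d w := by
      ext y
      simp only [Set.mem_preimage, Set.mem_iUnion, Set.mem_ofPred_eq, exists_prop]
      refine ⟨fun hy => ?_, fun ⟨w, hw, hyw⟩ => hw hyw⟩
      obtain ⟨ε, hε, hball⟩ := Metric.isOpen_iff.mp hV _ hy
      obtain ⟨k, hk⟩ := exists_pow_lt_of_lt_one hε (by norm_num : (2⁻¹ : ℝ) < 1)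
      obtain ⟨w, rfl, hyw⟩ := exists_mem_Qcube y.2 k
      refine ⟨w, fun z hz => hball ?_, hyw⟩
      rw [Metric.mem_ball]
      exact (dist_le_of_mem_Qcube hz hyw).trans_lt (by rwa [← inv_pow])
    rw [hunion]
    exact MeasurableSet.biUnion (Set.to_countable _)
      fun w _ => MeasurableSpace.measurableSet_generateFrom ⟨w, rfl⟩
  · rintro _ ⟨w, rfl⟩
    exact measurable_subtype_coe (measurableSet_Qcube w)

lemma Measure.ext_of_forall_Qcube {μ₁ μ₂ : Measure (unitCube d)} [IsFiniteMeasure μ₁]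
    (h : ∀ w : Wd d, μ₁ (Subtype.val ⁻¹' Qcube d w) = μ₂ (Subtype.val ⁻¹' Qcube d w)) :
    μ₁ = μ₂ := by
  refine ext_of_generate_finite _ measurableSpace_eq_generateFrom_cubeSets isPiSystem_cubeSets
    (fun _ ⟨w, hw⟩ => hw ▸ h w) ?_
  simpa [Qcube_nil] using h []

end UnitCube

instance (d : ℕ) : BorelSpace (ProbabilityMeasure (unitCube d)) := ⟨rfl⟩

lemma integral_measure_Qcube_eq_integral_label {d : ℕ} {P : Measure (Wd d → Pt d)}
    {ν : Measure (ProbabilityMeasure (unitCube d))}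
    (hν : ∀ (F : Finset (Wd d)) (A : Set (F → ℝ)), MeasurableSet A →
      ν {μ | (fun w : F =>
          ((μ : Measure (Set.Icc (0 : Fin d → ℝ) 1))
            (Subtype.val ⁻¹' Qcube d (w : Wd d))).toReal) ∈ A} =
        P {x | (fun w : F => label d x (w : Wd d)) ∈ A})
    (w : Wd d) :
    ∫ μ, ((μ : Measure (unitCube d)) (Subtype.val ⁻¹' Qcube d w)).toReal ∂ν =
      ∫ x, label d x w ∂P := by
  have hmeas : Measurable fun μ : ProbabilityMeasure (unitCube d) =>
      ((μ : Measure (unitCube d)) (Subtype.val ⁻¹' Qcube d w)).toReal :=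
    ((Measure.measurable_coe (measurable_subtype_coe (measurableSet_Qcube w))).comp
      ProbabilityMeasure.measurable_toMeasure_of_borelSpace).ennreal_toReal
  refine ProbabilityTheory.IdentDistrib.integral_eq
    ⟨hmeas.aemeasurable, (measurable_label d w).aemeasurable, ?_⟩
  ext S hS
  rw [Measure.map_apply hmeas hS, Measure.map_apply (measurable_label d w) hS]
  exact hν {w} _ (measurable_pi_apply (⟨w, Finset.mem_singleton_self w⟩ : ({w} : Finset _)) hS)

lemma integral_measure_Qcube_eq_volume {d : ℕ} [IsProbabilityMeasure (sigmaMeas d)]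
    {P : Measure (Wd d → Pt d)}
    (hP : ∀ F : Finset (Wd d),
      P.map (fun x (w : F) => x (w : Wd d)) = Measure.pi fun _ : F => sigmaMeas d)
    {ν : Measure (ProbabilityMeasure (unitCube d))}
    (hν : ∀ (F : Finset (Wd d)) (A : Set (F → ℝ)), MeasurableSet A →
      ν {μ | (fun w : F =>
          ((μ : Measure (Set.Icc (0 : Fin d → ℝ) 1))
            (Subtype.val ⁻¹' Qcube d (w : Wd d))).toReal) ∈ A} =
        P {x | (fun w : F => label d x (w : Wd d)) ∈ A})
    (w : Wd d) :
    ∫ μ, ((μ : Measure (unitCube d)) (Subtype.val ⁻¹' Qcube d w)).toReal ∂ν =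
      (volume (Qcube d w)).toReal := by
  rw [integral_measure_Qcube_eq_integral_label hν, integral_label d hP, volume_Qcube,
    ENNReal.toReal_pow, ENNReal.toReal_ofReal (by positivity), ← inv_pow, ← inv_pow, ← pow_mul,
    ← pow_mul, mul_comm]

theorem stmt5_general (d : ℕ) (P : Measure (Wd d → Pt d)) [IsProbabilityMeasure P]
    (hP : ∀ F : Finset (Wd d),
      P.map (fun x (w : F) => x (w : Wd d)) = Measure.pi fun _ : F => sigmaMeas d)
    (ν : Measure (ProbabilityMeasure (Set.Icc (0 : Fin d → ℝ) 1))) [IsProbabilityMeasure ν]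
    (hν : ∀ (F : Finset (Wd d)) (A : Set (F → ℝ)), MeasurableSet A →
      ν {μ | (fun w : F =>
          ((μ : Measure (Set.Icc (0 : Fin d → ℝ) 1))
            (Subtype.val ⁻¹' Qcube d (w : Wd d))).toReal) ∈ A} =
        P {x | (fun w : F => label d x (w : Wd d)) ∈ A})
    (E : Set (Fin d → ℝ)) (hE : MeasurableSet E) (hE1 : E ⊆ Set.Icc 0 1) :
    AEMeasurable (fun μ : ProbabilityMeasure (Set.Icc (0 : Fin d → ℝ) 1) =>
      ((μ : Measure (Set.Icc (0 : Fin d → ℝ) 1)) (Subtype.val ⁻¹' E)).toReal) ν ∧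
    ∫ μ, ((μ : Measure (Set.Icc (0 : Fin d → ℝ) 1)) (Subtype.val ⁻¹' E)).toReal ∂ν =
      (volume E).toReal := by
  have htoMeasure := ProbabilityMeasure.measurable_toMeasure_of_borelSpace (Ω := unitCube d)
  have hσ : IsProbabilityMeasure (sigmaMeas d) :=
    map_eval_eq_of_map_restrict_eq_pi [] (hP _) ▸
      Measure.isProbabilityMeasure_map (measurable_pi_apply _).aemeasurable
  have hEB : MeasurableSet (Subtype.val ⁻¹' E : Set (unitCube d)) := measurable_subtype_coe hE
  refine ⟨((Measure.measurable_coe hEB).comp htoMeasure).ennreal_toReal.aemeasurable, ?_⟩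
  have := ProbabilityMeasure.isProbabilityMeasure_bind_toMeasure ν htoMeasure
  have hmean : (ν.bind fun μ => (μ : Measure (unitCube d))) = volume.comap Subtype.val := by
    refine Measure.ext_of_forall_Qcube fun w => ?_
    have hfin : volume (Qcube d w) ≠ ⊤ :=
      ((measure_mono (Qcube_subset_Icc w)).trans_lt isCompact_Icc.measure_lt_top).ne
    rw [comap_volume_preimage_val (Qcube_subset_Icc w), ← ENNReal.toReal_eq_toReal_iff'
      (measure_ne_top _ _) hfin, ← ProbabilityMeasure.integral_toReal_apply_eq_bind ν htoMeasure
      (measurable_subtype_coe (measurableSet_Qcube w)), integral_measure_Qcube_eq_volume hP hν]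
  rw [ProbabilityMeasure.integral_toReal_apply_eq_bind ν htoMeasure hEB, hmean,
    comap_volume_preimage_val hE1]

/-- If `ν` is a Borel probability measure on `P([0,1]^d)` whose
finite-dimensional distributions of dyadic-cube measures agree with those of the labels under
`ℙ`, then for every Borel `E ⊆ [0,1]^d`, `μ ↦ μ(E)` is `ν`-measurable with
`∫ μ(E) dν(μ) = λ_d(E)`. -/
theorem stmt5 (d : ℕ) (hd : 1 ≤ d) (P : Measure (Wd d → Pt d)) [IsProbabilityMeasure P]
    (hP : ∀ F : Finset (Wd d),
      P.map (fun x (w : F) => x (w : Wd d)) = Measure.pi fun _ : F => sigmaMeas d)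
    (ν : Measure (ProbabilityMeasure (Set.Icc (0 : Fin d → ℝ) 1))) [IsProbabilityMeasure ν]
    (hν : ∀ (F : Finset (Wd d)) (A : Set (F → ℝ)), MeasurableSet A →
      ν {μ | (fun w : F =>
          ((μ : Measure (Set.Icc (0 : Fin d → ℝ) 1))
            (Subtype.val ⁻¹' Qcube d (w : Wd d))).toReal) ∈ A} =
        P {x | (fun w : F => label d x (w : Wd d)) ∈ A})
    (E : Set (Fin d → ℝ)) (hE : MeasurableSet E) (hE1 : E ⊆ Set.Icc 0 1) :
    AEMeasurable (fun μ : ProbabilityMeasure (Set.Icc (0 : Fin d → ℝ) 1) =>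
      ((μ : Measure (Set.Icc (0 : Fin d → ℝ) 1)) (Subtype.val ⁻¹' E)).toReal) ν ∧
    ∫ μ, ((μ : Measure (Set.Icc (0 : Fin d → ℝ) 1)) (Subtype.val ⁻¹' E)).toReal ∂ν =
      (volume E).toReal :=
  stmt5_general d P hP ν hν E hE hE1
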